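/- arXiv:2111.09037 — 2 statements merged into one kernel-verified Lean document; each statement's English description precedes it below -/
import Mathlib

section
/- If Bv = λv and Bu = μu with λ ≠ μ, then vᵀPu = 0, i.e., right eigenvectors of B with distinct eigenvalues are P-orthogonal. -/
open Matrix

/-- The non-backtracking matrix of a graph, indexed by oriented edges (darts):
`B_{k→l, i→j} = δ_{jk} (1 - δ_{il})`. -/
def nbMatrix {V : Type*} [Fintype V] [DecidableEq V] (G : SimpleGraph V)
    [DecidableRel G.Adj] : Matrix G.Dart G.Dart ℂ :=
  fun e f => if f.toProd.2 = e.toProd.1 ∧ e.toProd.2 ≠ f.toProd.1 then 1 else 0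

/-- The orientation reversal operator `P`, with `(P v)_{k→l} = v_{l→k}`. -/
def revOp {V : Type*} [Fintype V] [DecidableEq V] (G : SimpleGraph V)
    [DecidableRel G.Adj] : Matrix G.Dart G.Dart ℂ :=
  fun e f => if f = e.symm then 1 else 0

lemma nb_transpose_rev {V : Type*} [Fintype V] [DecidableEq V] (G : SimpleGraph V)
    [DecidableRel G.Adj] :
    (nbMatrix G)ᵀ * revOp G = revOp G * nbMatrix G := by
  ext e f
  have h1 : ((nbMatrix G)ᵀ * revOp G) e f = nbMatrix G f.symm e := by
    simp only [Matrix.mul_apply, Matrix.transpose_apply, revOp, mul_ite, mul_one, mul_zero]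
    simp only [show ∀ x : G.Dart, (f = x.symm) = (x = f.symm) from fun x =>
      propext ⟨fun h => by simp [h], fun h => by simp [h]⟩]
    rw [Finset.sum_ite_eq' Finset.univ f.symm (fun g => nbMatrix G g e)]
    simp
  have h2 : (revOp G * nbMatrix G) e f = nbMatrix G e.symm f := by
    simp only [Matrix.mul_apply, revOp, ite_mul, one_mul, zero_mul]
    rw [Finset.sum_ite_eq' Finset.univ e.symm (fun g => nbMatrix G g f)]
    simp
  rw [h1, h2]
  simp only [nbMatrix, SimpleGraph.Dart.symm_toProd, Prod.fst_swap, Prod.snd_swap]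
  congr 1
  exact propext ⟨fun ⟨a, b⟩ => ⟨a.symm, fun h => b h.symm⟩,
    fun ⟨a, b⟩ => ⟨a.symm, fun h => b h.symm⟩⟩

/-- right eigenvectors of `B` with distinct eigenvalues are `P`-orthogonal. -/
theorem nbMatrix_eigenvectors_P_orthogonal
    {V : Type*} [Fintype V] [DecidableEq V] (G : SimpleGraph V) [DecidableRel G.Adj]
    (v u : G.Dart → ℂ) (l m : ℂ)
    (hv : (nbMatrix G).mulVec v = l • v) (hu : (nbMatrix G).mulVec u = m • u)
    (hlm : l ≠ m) :
    v ⬝ᵥ (revOp G).mulVec u = 0 := by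
  set B := nbMatrix G
  set P := revOp G
  have key : l * (v ⬝ᵥ P.mulVec u) = m * (v ⬝ᵥ P.mulVec u) := by
    calc l * (v ⬝ᵥ P.mulVec u) = (l • v) ⬝ᵥ P.mulVec u := by
          rw [smul_dotProduct, smul_eq_mul]
      _ = (B.mulVec v) ⬝ᵥ P.mulVec u := by rw [hv]
      _ = v ⬝ᵥ (Bᵀ.mulVec (P.mulVec u)) := by
          rw [dotProduct_comm, Matrix.dotProduct_mulVec, dotProduct_comm,
            Matrix.mulVec_transpose]
      _ = v ⬝ᵥ ((Bᵀ * P).mulVec u) := by rw [Matrix.mulVec_mulVec]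
      _ = v ⬝ᵥ ((P * B).mulVec u) := by rw [nb_transpose_rev]
      _ = v ⬝ᵥ (P.mulVec (B.mulVec u)) := by rw [Matrix.mulVec_mulVec]
      _ = v ⬝ᵥ (P.mulVec (m • u)) := by rw [hu]
      _ = m * (v ⬝ᵥ P.mulVec u) := by
          rw [Matrix.mulVec_smul, dotProduct_smul, smul_eq_mul]
  have : (l - m) * (v ⬝ᵥ P.mulVec u) = 0 := by ring_nf; linear_combination key
  rcases mul_eq_zero.mp this with h | h
  · exact absurd (sub_eq_zero.mp h) hlm
  · exact h
end

section
/- The characteristic polynomials satisfy det(B^c − tI) = t^{2d} det(B − tI + X/t²) for all t ≠ 0, where d is the degree of the added node c and X = DFE. -/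
open Matrix

/-- The graph `G^c` obtained from `G` by adding a new node `c` (the vertex `none`)
joined to exactly the vertices in `S`. -/
def addNode {V : Type*} (G : SimpleGraph V) (S : Finset V) : SimpleGraph (Option V) where
  Adj x y :=
    match x, y with
    | some a, some b => G.Adj a b
    | some a, none => a ∈ S
    | none, some b => b ∈ S
    | none, none => False
  symm := by
    constructor
    intro x y h
    match x, y with
    | some a, some b => exact G.adj_symm h
    | some a, none => exact h
    | none, some b => exact h
  loopless := by
    constructor
    intro x h
    match x with
    | some a => exact G.irrefl h
    | none => exact h

instance {V : Type*} [DecidableEq V] (G : SimpleGraph V) [DecidableRel G.Adj] (S : Finset V) :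
    DecidableRel (addNode G S).Adj := fun x y =>
  match x, y with
  | some a, some b => inferInstanceAs (Decidable (G.Adj a b))
  | some a, none => inferInstanceAs (Decidable (a ∈ S))
  | none, some b => inferInstanceAs (Decidable (b ∈ S))
  | none, none => inferInstanceAs (Decidable False)

variable {V : Type*} [Fintype V] [DecidableEq V]

/-- A dart of `G^c` is *new* if it is incident to the added node `c = none`. -/
def isNewDart {V : Type*} (G : SimpleGraph V) (S : Finset V)
    (e : (addNode G S).Dart) : Prop :=
  e.toProd.1 = none ∨ e.toProd.2 = none

instance {V : Type*} [DecidableEq V] (G : SimpleGraph V) (S : Finset V) :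
    DecidablePred (isNewDart G S) := fun e =>
  inferInstanceAs (Decidable (_ ∨ _))

/-- The NB matrix of `G^c`. -/
def Bc (G : SimpleGraph V) [DecidableRel G.Adj] (S : Finset V) :
    Matrix (addNode G S).Dart (addNode G S).Dart ℂ := nbMatrix (addNode G S)

/-- The block `D` of `B^c` (rows: old edges, columns: new edges), zero-padded to full size. -/
def Dblk (G : SimpleGraph V) [DecidableRel G.Adj] (S : Finset V) :
    Matrix (addNode G S).Dart (addNode G S).Dart ℂ :=
  fun e f => if ¬ isNewDart G S e ∧ isNewDart G S f then Bc G S e f else 0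

/-- The block `E` of `B^c` (rows: new edges, columns: old edges), zero-padded to full size. -/
def Eblk (G : SimpleGraph V) [DecidableRel G.Adj] (S : Finset V) :
    Matrix (addNode G S).Dart (addNode G S).Dart ℂ :=
  fun e f => if isNewDart G S e ∧ ¬ isNewDart G S f then Bc G S e f else 0

/-- The block `F` of `B^c` (rows and columns: new edges), zero-padded to full size. -/
def Fblk (G : SimpleGraph V) [DecidableRel G.Adj] (S : Finset V) :
    Matrix (addNode G S).Dart (addNode G S).Dart ℂ :=
  fun e f => if isNewDart G S e ∧ isNewDart G S f then Bc G S e f else 0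

/-- The matrix `X = D F E`. -/
noncomputable def Xmat (G : SimpleGraph V) [DecidableRel G.Adj] (S : Finset V) :
    Matrix (addNode G S).Dart (addNode G S).Dart ℂ :=
  Dblk G S * Fblk G S * Eblk G S

/-- The type of old darts of `G^c`, i.e. the darts of `G`. -/
def OldDart (G : SimpleGraph V) (S : Finset V) : Type _ :=
  {e : (addNode G S).Dart // ¬ isNewDart G S e}

instance (G : SimpleGraph V) [DecidableRel G.Adj] (S : Finset V) : Fintype (OldDart G S) :=
  inferInstanceAs (Fintype {e : (addNode G S).Dart // ¬ isNewDart G S e})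

instance (G : SimpleGraph V) (S : Finset V) : DecidableEq (OldDart G S) :=
  inferInstanceAs (DecidableEq {e : (addNode G S).Dart // ¬ isNewDart G S e})

/-- The NB matrix `B` of the original graph `G`, realized as the old-edge block of `B^c`. -/
def Bold (G : SimpleGraph V) [DecidableRel G.Adj] (S : Finset V) :
    Matrix (OldDart G S) (OldDart G S) ℂ :=
  fun e f => Bc G S e.1 f.1

/-- The matrix `X = D F E` restricted to its (only nonzero) old-edge block. -/
noncomputable def Xsub (G : SimpleGraph V) [DecidableRel G.Adj] (S : Finset V) :
    Matrix (OldDart G S) (OldDart G S) ℂ :=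
  fun e f => Xmat G S e.1 f.1

/-! ### Auxiliary material -/

section Aux

open Polynomial

variable (G : SimpleGraph V) [DecidableRel G.Adj] (S : Finset V)

/-- The type of new darts. -/
abbrev NewDart : Type _ := {e : (addNode G S).Dart // isNewDart G S e}

/-- The `F` block as an honest matrix on new darts. -/
def F0 : Matrix (NewDart G S) (NewDart G S) ℂ := fun i j => Bc G S i.1 j.1

/-- The `D` block as an honest matrix. -/
def D0 : Matrix (OldDart G S) (NewDart G S) ℂ := fun i j => Bc G S i.1 j.1

/-- The `E` block as an honest matrix. -/
def E0 : Matrix (NewDart G S) (OldDart G S) ℂ := fun i j => Bc G S i.1 j.1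

lemma new_cases (d : (addNode G S).Dart) (h : isNewDart G S d) :
    (d.toProd.1 = none ∧ d.toProd.2 ≠ none) ∨ (d.toProd.2 = none ∧ d.toProd.1 ≠ none) := by
  have hne : d.toProd.1 ≠ d.toProd.2 := (d.adj).ne
  rcases h with h | h
  · exact Or.inl ⟨h, fun h2 => hne (h.trans h2.symm)⟩
  · exact Or.inr ⟨h, fun h1 => hne (h1.trans h.symm)⟩

lemma F0_sq : F0 G S * F0 G S = 0 := by
  ext i k
  show (∑ j : NewDart G S, F0 G S i j * F0 G S j k) = 0
  refine Finset.sum_eq_zero fun j _ => ?_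
  simp only [F0, Bc, nbMatrix]
  split_ifs with h1 h2
  · exfalso
    obtain ⟨hj2, hne1⟩ := h1
    obtain ⟨hk2, hne2⟩ := h2
    rcases new_cases G S j.1 j.2 with ⟨hja, hjb⟩ | ⟨hja, hjb⟩
    · have hi1 : i.1.toProd.1 ≠ none := by rw [← hj2]; exact hjb
      have hi2 : i.1.toProd.2 = none := i.2.resolve_left hi1
      exact hne1 (hi2.trans hja.symm)
    · have hk1 : k.1.toProd.2 ≠ none := by rw [hk2]; exact hjb
      have hk0 : k.1.toProd.1 = none := k.2.resolve_right hk1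
      exact hne2 (hja.trans hk0.symm)
  all_goals simp

lemma D0_mul_E0 : D0 G S * E0 G S = 0 := by
  ext e g
  show (∑ f : NewDart G S, D0 G S e f * E0 G S f g) = 0
  refine Finset.sum_eq_zero fun f _ => ?_
  simp only [D0, E0, Bc, nbMatrix]
  split_ifs with h1 h2
  · exfalso
    obtain ⟨hf2, -⟩ := h1
    obtain ⟨hg2, -⟩ := h2
    rcases new_cases G S f.1 f.2 with ⟨hfa, -⟩ | ⟨hfa, -⟩
    · exact g.2 (Or.inr (hg2.trans hfa))
    · exact e.2 (Or.inl (hf2.symm.trans hfa))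
  all_goals simp

/-- Summation over darts reduces to summation over new darts if the summand
vanishes on old darts. -/
lemma sum_new (h : (addNode G S).Dart → ℂ) (h0 : ∀ d, ¬ isNewDart G S d → h d = 0) :
    (∑ d, h d) = ∑ d : NewDart G S, h d.1 := by
  classical
  rw [← (Equiv.sumCompl (isNewDart G S)).sum_comp h, Fintype.sum_sum_type]
  have : (∑ d : {e : (addNode G S).Dart // ¬ isNewDart G S e},
      h ((Equiv.sumCompl (isNewDart G S)) (Sum.inr d))) = 0 :=
    Finset.sum_eq_zero fun d _ => h0 d.1 d.2
  rw [this, add_zero]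
  rfl

lemma X0_eq : D0 G S * F0 G S * E0 G S = Xsub G S := by
  ext e g
  have houter : Xsub G S e g
      = ∑ f' : NewDart G S, (Dblk G S * Fblk G S) e.1 f'.1 * Eblk G S f'.1 g.1 := by
    show (Dblk G S * Fblk G S * Eblk G S) e.1 g.1 = _
    rw [Matrix.mul_apply]
    refine sum_new G S _ fun d hd => ?_
    have : Eblk G S d g.1 = 0 := by
      simp only [Eblk]
      rw [if_neg]
      exact fun hc => hd hc.1
    rw [this, mul_zero]
  have hinner : ∀ f' : NewDart G S,
      (Dblk G S * Fblk G S) e.1 f'.1 = ∑ f : NewDart G S, Dblk G S e.1 f.1 * Fblk G S f.1 f'.1 := by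
    intro f'
    rw [Matrix.mul_apply]
    refine sum_new G S _ fun d hd => ?_
    have : Fblk G S d f'.1 = 0 := by
      simp only [Fblk]
      rw [if_neg]
      exact fun hc => hd hc.1
    rw [this, mul_zero]
  rw [houter]
  show (∑ f' : NewDart G S, (∑ f : NewDart G S, D0 G S e f * F0 G S f f') * E0 G S f' g) = _
  refine (Finset.sum_congr rfl fun f' _ => ?_).symm
  rw [hinner]
  congr 1
  · refine Finset.sum_congr rfl fun f _ => ?_
    congr 1
    · simp only [Dblk]; rw [if_pos ⟨e.2, f.2⟩]; rfl
    · simp only [Fblk]; rw [if_pos ⟨f.2, f'.2⟩]; rfl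
  · simp only [Eblk]; rw [if_pos ⟨f'.2, g.2⟩]; rfl

/-- The number of new darts is `2 |S|`. -/
lemma card_new : Fintype.card (NewDart G S) = 2 * S.card := by
  classical
  have hadj1 : ∀ s : S, (addNode G S).Adj none (some s.1) := fun s => s.2
  have hadj2 : ∀ s : S, (addNode G S).Adj (some s.1) none := fun s => s.2
  let f : (S ⊕ S) → NewDart G S :=
    Sum.elim (fun s => ⟨⟨(none, some s.1), hadj1 s⟩, Or.inl rfl⟩)
      (fun s => ⟨⟨(some s.1, none), hadj2 s⟩, Or.inr rfl⟩)
  have hbij : Function.Bijective f := by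
    constructor
    · rintro (s | s) (r | r) h <;>
        simp only [f, Sum.elim_inl, Sum.elim_inr, Subtype.mk.injEq,
          SimpleGraph.Dart.mk.injEq, Prod.mk.injEq] at h
      · have h' := congrArg (fun x : NewDart G S => x.1.toProd) h
        exact congrArg Sum.inl (Subtype.ext (by simpa using h'))
      · have h' := congrArg (fun x : NewDart G S => x.1.toProd) h
        simp at h'
      · have h' := congrArg (fun x : NewDart G S => x.1.toProd) h
        simp at h'
      · have h' := congrArg (fun x : NewDart G S => x.1.toProd) h
        exact congrArg Sum.inr (Subtype.ext (by simpa using h'))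
    · rintro ⟨d, hd⟩
      rcases new_cases G S d hd with ⟨h1, h2⟩ | ⟨h1, h2⟩
      · obtain ⟨b, hb⟩ := Option.ne_none_iff_exists'.mp h2
        have hbS : b ∈ S := by
          have := d.adj; rw [h1, hb] at this; exact this
        refine ⟨Sum.inl ⟨b, hbS⟩, ?_⟩
        apply Subtype.ext
        apply SimpleGraph.Dart.ext
        exact (Prod.ext_iff.mpr ⟨h1, hb⟩).symm
      · obtain ⟨a, ha⟩ := Option.ne_none_iff_exists'.mp h2
        have haS : a ∈ S := by
          have := d.adj; rw [h1, ha] at this; exact this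
        refine ⟨Sum.inr ⟨a, haS⟩, ?_⟩
        apply Subtype.ext
        apply SimpleGraph.Dart.ext
        exact (Prod.ext_iff.mpr ⟨ha, h1⟩).symm
  calc Fintype.card (NewDart G S) = Fintype.card (S ⊕ S) :=
        (Fintype.card_of_bijective hbij).symm
    _ = 2 * S.card := by
        rw [Fintype.card_sum, Fintype.card_coe]; ring

lemma eval_charpoly_aux {ι : Type*} [Fintype ι] [DecidableEq ι] (M : Matrix ι ι ℂ) (t : ℂ) :
    (M.charpoly).eval t = (t • (1 : Matrix ι ι ℂ) - M).det := by
  rw [Matrix.charpoly, ← Polynomial.coe_evalRingHom, RingHom.map_det]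
  congr 1
  ext i j
  by_cases h : i = j
  · subst h
    simp [Matrix.charmatrix_apply_eq, Matrix.one_apply]
  · simp [Matrix.charmatrix_apply_ne _ _ _ h, Matrix.one_apply_ne h]

lemma det_F0_sub (t : ℂ) : (F0 G S - t • 1).det = t ^ (2 * S.card) := by
  have hnil : IsNilpotent (F0 G S) := ⟨2, by rw [pow_two]; exact F0_sq G S⟩
  have hchar : (F0 G S).charpoly = X ^ (Fintype.card (NewDart G S)) := by
    have h := Matrix.isNilpotent_charpoly_sub_pow_of_isNilpotent hnil
    exact sub_eq_zero.mp h.eq_zero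
  have h1 : F0 G S - t • 1 = -(t • 1 - F0 G S) := (neg_sub _ _).symm
  rw [h1, Matrix.det_neg, ← eval_charpoly_aux, hchar, card_new]
  simp [pow_mul]

end Aux

/-- `det(B^c − tI) = t^{2d} det(B − tI + X/t²)` for all `t ≠ 0`,
where `d` is the degree of the added node. -/
theorem det_Bc_eq (G : SimpleGraph V) [DecidableRel G.Adj] (S : Finset V)
    (hS : S.Nonempty) (t : ℂ) (ht : t ≠ 0) :
    (Bc G S - t • (1 : Matrix (addNode G S).Dart (addNode G S).Dart ℂ)).det =
      t ^ (2 * S.card) *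
        (Bold G S - t • (1 : Matrix (OldDart G S) (OldDart G S) ℂ)
          + (t ^ 2)⁻¹ • Xsub G S).det := by
  classical
  set σ : NewDart G S ⊕ OldDart G S ≃ (addNode G S).Dart :=
    Equiv.sumCompl (isNewDart G S) with hσ
  have hσinl : ∀ i : NewDart G S, σ (Sum.inl i) = i.1 := fun i => rfl
  have hσinr : ∀ i : OldDart G S, σ (Sum.inr i) = i.1 := fun i => rfl
  have hblock : (Bc G S - t • 1).submatrix σ σ =
      Matrix.fromBlocks (F0 G S - t • 1) (E0 G S) (D0 G S)
        (Bold G S - t • (1 : Matrix (OldDart G S) (OldDart G S) ℂ)) := by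
    ext i j
    cases i with
    | inl i =>
      cases j with
      | inl j =>
        simp only [Matrix.submatrix_apply, hσinl, Matrix.fromBlocks_apply₁₁,
          Matrix.sub_apply, Matrix.smul_apply, Matrix.one_apply, smul_eq_mul]
        rw [if_congr (Iff.symm Subtype.ext_iff) rfl rfl]
        rfl
      | inr j =>
        simp only [Matrix.submatrix_apply, hσinl, hσinr, Matrix.fromBlocks_apply₁₂,
          Matrix.sub_apply, Matrix.smul_apply, Matrix.one_apply, smul_eq_mul]
        rw [if_neg (fun h : i.1 = j.1 => j.2 (h ▸ i.2))]
        simp [E0]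
    | inr i =>
      cases j with
      | inl j =>
        simp only [Matrix.submatrix_apply, hσinl, hσinr, Matrix.fromBlocks_apply₂₁,
          Matrix.sub_apply, Matrix.smul_apply, Matrix.one_apply, smul_eq_mul]
        rw [if_neg (fun h : i.1 = j.1 => i.2 (h ▸ j.2))]
        simp [D0]
      | inr j =>
        simp only [Matrix.submatrix_apply, hσinr, Matrix.fromBlocks_apply₂₂,
          Matrix.sub_apply, Matrix.smul_apply, Matrix.one_apply, smul_eq_mul]
        by_cases h : i = j
        · subst h; simp [Bold]
        rw [if_neg h, if_neg (fun h' => h (Subtype.ext h'))]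
        rfl
  set W : Matrix (NewDart G S) (NewDart G S) ℂ := -(t⁻¹ • (1 + t⁻¹ • F0 G S)) with hW
  have hright : (F0 G S - t • 1) * W = 1 := by
    have hsq := F0_sq G S
    have expand : (F0 G S - t • 1) * (1 + t⁻¹ • F0 G S) = -(t • 1) := by
      rw [Matrix.mul_add, Matrix.mul_one, Matrix.mul_smul, Matrix.sub_mul, hsq,
        Matrix.smul_mul, Matrix.one_mul, zero_sub, smul_neg, smul_smul,
        inv_mul_cancel₀ ht, one_smul]
      abel
    rw [hW, Matrix.mul_neg, Matrix.mul_smul, expand, smul_neg, neg_neg, smul_smul,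
      inv_mul_cancel₀ ht, one_smul]
  letI : Invertible (F0 G S - t • 1) := invertibleOfRightInverse _ _ hright
  have hinv : ⅟(F0 G S - t • 1) = W := invOf_eq_right_inv hright
  have hSchur : (Bold G S - t • (1 : Matrix (OldDart G S) (OldDart G S) ℂ))
      - D0 G S * W * E0 G S
      = Bold G S - t • (1 : Matrix (OldDart G S) (OldDart G S) ℂ) + (t ^ 2)⁻¹ • Xsub G S := by
    have hDE := D0_mul_E0 G S
    have hX := X0_eq G S
    have hmid : D0 G S * (1 + t⁻¹ • F0 G S) * E0 G S = t⁻¹ • Xsub G S := by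
      rw [Matrix.mul_add, Matrix.mul_one, Matrix.mul_smul, Matrix.add_mul,
        Matrix.smul_mul, hDE, Matrix.mul_assoc, ← Matrix.mul_assoc, hX, zero_add]
    have : D0 G S * W * E0 G S = -((t ^ 2)⁻¹ • Xsub G S) := by
      rw [hW, Matrix.mul_neg, Matrix.neg_mul, Matrix.mul_smul, Matrix.smul_mul, hmid,
        smul_smul, ← mul_inv, ← sq]
    rw [this, sub_neg_eq_add]
  calc (Bc G S - t • (1 : Matrix (addNode G S).Dart (addNode G S).Dart ℂ)).det
      = ((Bc G S - t • 1).submatrix σ σ).det := (Matrix.det_submatrix_equiv_self σ _).symm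
    _ = (Matrix.fromBlocks (F0 G S - t • 1) (E0 G S) (D0 G S)
          (Bold G S - t • (1 : Matrix (OldDart G S) (OldDart G S) ℂ))).det := by rw [hblock]
    _ = (F0 G S - t • 1).det *
          ((Bold G S - t • (1 : Matrix (OldDart G S) (OldDart G S) ℂ))
            - D0 G S * ⅟(F0 G S - t • 1) * E0 G S).det := Matrix.det_fromBlocks₁₁ _ _ _ _
    _ = t ^ (2 * S.card) *
          (Bold G S - t • (1 : Matrix (OldDart G S) (OldDart G S) ℂ)
            + (t ^ 2)⁻¹ • Xsub G S).det := by
        rw [det_F0_sub, hinv, hSchur]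
end
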